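/- Let R be a commutative noetherian ring and X a finitely generated R-module with Ext^i_R(X,R) = 0 for all 0 ≤ i ≤ c, where c ≥ 0. Then for every n ≥ 1, every R-module homomorphism from the c-th syzygy Ω^c X to the (c+n)-th syzygy Ω^{c+n} Y of any finitely generated R-module Y factors through a projective R-module. -/

import Mathlib

open CategoryTheory
universe u
noncomputable section

/-- A linear map factors through a projective module. -/
def FactorsThroughProjective {R : Type u} [Ring R] {M N : Type u}
    [AddCommGroup M] [AddCommGroup N] [Module R M] [Module R N] (f : M →ₗ[R] N) : Prop :=
  ∃ (P : Type u) (_ : AddCommGroup P) (_ : Module R P), Module.Projective R P ∧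
    ∃ (g : M →ₗ[R] P) (h : P →ₗ[R] N), h.comp g = f

/-- `Ext^i_R(X, Y) = 0`. -/
def extZero (R : Type u) [CommRing R] (i : ℕ) (X Y : ModuleCat.{u} R) : Prop :=
  Subsingleton (((Ext R (ModuleCat.{u} R) i).obj (Opposite.op X)).obj Y)

/-- `Y` is an `n`-th syzygy of `N` (via finitely generated projective modules). -/
def IsSyzygy (R : Type u) [CommRing R] : ℕ → ModuleCat.{u} R → ModuleCat.{u} R → Prop
  | 0, Y, N => Nonempty (Y ≅ N)
  | n+1, Y, N => ∃ (P K : ModuleCat.{u} R) (i : Y ⟶ P) (p : P ⟶ K),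
      Projective P ∧ Module.Finite R P ∧ Function.Injective i ∧ Function.Surjective p ∧
      Function.Exact i p ∧ IsSyzygy R n K N

/-- projective dimension at most `n` -/
def pdLE (A : Type u) [Ring A] : ℕ → ModuleCat.{u} A → Prop
  | 0, M => Projective M
  | n+1, M => Projective M ∨ ∃ (K P : ModuleCat.{u} A) (i : K ⟶ P) (p : P ⟶ M),
      Projective P ∧ Function.Injective i ∧ Function.Surjective p ∧
      Function.Exact i p ∧ pdLE A n K

/-- global dimension at most `n` -/
def gldimLE (A : Type u) [Ring A] (n : ℕ) : Prop := ∀ M : ModuleCat.{u} A, pdLE A n M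

/-- `M` is `d`-torsionfree: it is a `d`-th syzygy of a finitely generated module `N`
with `Ext^i(N,R) = 0` for `1 ≤ i ≤ d`. -/
def IsTorsionFree (R : Type u) [CommRing R] (d : ℕ) (M : ModuleCat.{u} R) : Prop :=
  ∃ N : ModuleCat.{u} R, Module.Finite R N ∧
    (∀ i, 1 ≤ i → i ≤ d → extZero R i N (ModuleCat.of R R)) ∧ IsSyzygy R d M N

/-- `N` lies in `add M`: it is a direct summand of a finite direct sum of copies of `M`. -/
def MemAdd (R : Type u) [CommRing R] (M N : ModuleCat.{u} R) : Prop :=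
  ∃ (k : ℕ) (i : N →ₗ[R] (Fin k → M)) (p : (Fin k → M) →ₗ[R] N), p.comp i = LinearMap.id

/-!
Induction on `c`. Embed `V` into a finitely generated projective `P` with cokernel `V₁`, a
`(c + n - 1)`-th syzygy of `Y`. For `c = 0`, `Hom(X, R) = 0` forces `Hom(X, P) = 0`, so `f = 0`.
For `c + 1`, embed `W` into a projective `Q` with cokernel `K`, a `c`-th syzygy of `X`. Dimension
shifting gives `Ext¹(K, R) = Ext^{c+1}(X, R) = 0`, so maps `W → R`, hence maps `W → P`, extend
to `Q`; let `G : Q → P` extend `W → V → P`. It induces `K → V₁`, which factors through a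
projective by induction; lifting that factorisation to `P` and subtracting it from `G` leaves a
map `Q → V` extending `f`.

Dimension shifting is read off the resolution `Q ← P₀ ← P₁ ← ⋯` of `X` built from a resolution
`P` of `K`: its `Hom(-, Y)`-complex agrees with that of `P` in degrees `≥ 2`.
-/

namespace Function.Exact

variable {R : Type*} [Ring R] {M N P L : Type*} [AddCommGroup M] [AddCommGroup N]
  [AddCommGroup P] [AddCommGroup L] [Module R M] [Module R N] [Module R P] [Module R L]
  {f : M →ₗ[R] N} {g : N →ₗ[R] P}

theorem exists_comp_eq_of_surjective (hfg : Exact f g) (hg : Surjective g) (h : N →ₗ[R] L)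
    (hh : h ∘ₗ f = 0) : ∃ h' : P →ₗ[R] L, h' ∘ₗ g = h := by
  refine ⟨(LinearMap.range f).liftQ h (LinearMap.range_le_ker_iff.2 hh) ∘ₗ
    (hfg.linearEquivOfSurjective hg).symm.toLinearMap, ?_⟩
  ext x
  simp

theorem exists_comp_eq_of_injective (hfg : Exact f g) (hf : Injective f) (u : L →ₗ[R] N)
    (hu : g ∘ₗ u = 0) : ∃ t : L →ₗ[R] M, f ∘ₗ t = u := by
  have hrange : ∀ x, u x ∈ LinearMap.range f := fun x => (hfg (u x)).1 (LinearMap.congr_fun hu x)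
  refine ⟨(LinearEquiv.ofInjective f hf).symm.toLinearMap ∘ₗ u.codRestrict _ hrange, ?_⟩
  ext x
  simp

end Function.Exact

section FiniteProjective

variable {R : Type*} [Ring R] {P : Type*} [AddCommGroup P] [Module R P]
  [Module.Finite R P] [Module.Projective R P]

theorem Module.Projective.exists_comp_eq_id_pi :
    ∃ (k : ℕ) (s : (Fin k → R) →ₗ[R] P) (r : P →ₗ[R] Fin k → R), s ∘ₗ r = LinearMap.id := by
  obtain ⟨k, s, hs⟩ := Module.Finite.exists_fin' R P
  obtain ⟨r, hr⟩ := Module.projective_lifting_property s LinearMap.id hs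
  exact ⟨k, s, r, hr⟩

variable {K Q : Type*} [AddCommGroup K] [AddCommGroup Q] [Module R K] [Module R Q]

theorem LinearMap.eq_zero_of_forall_functional_eq_zero (hK : ∀ ψ : K →ₗ[R] R, ψ = 0)
    (g : K →ₗ[R] P) : g = 0 := by
  obtain ⟨k, s, r, hsr⟩ := Module.Projective.exists_comp_eq_id_pi (R := R) (P := P)
  have hrg : r ∘ₗ g = 0 := by
    ext x l
    exact LinearMap.congr_fun (hK (LinearMap.proj l ∘ₗ r ∘ₗ g)) x
  rw [← LinearMap.id_comp g, ← hsr, LinearMap.comp_assoc, hrg, LinearMap.comp_zero]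

theorem LinearMap.exists_extension_of_forall_functional (i : K →ₗ[R] Q)
    (hi : ∀ ψ : K →ₗ[R] R, ∃ φ : Q →ₗ[R] R, φ ∘ₗ i = ψ) (g : K →ₗ[R] P) :
    ∃ G : Q →ₗ[R] P, G ∘ₗ i = g := by
  obtain ⟨k, s, r, hsr⟩ := Module.Projective.exists_comp_eq_id_pi (R := R) (P := P)
  choose φ hφ using fun l : Fin k => hi (LinearMap.proj l ∘ₗ r ∘ₗ g)
  refine ⟨s ∘ₗ LinearMap.pi φ, ?_⟩
  have : LinearMap.pi φ ∘ₗ i = r ∘ₗ g := by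
    ext x l
    exact LinearMap.congr_fun (hφ l) x
  rw [LinearMap.comp_assoc, this, ← LinearMap.comp_assoc, hsr, LinearMap.id_comp]

end FiniteProjective

theorem factorsThroughProjective_zero {R : Type u} [Ring R] {M N : Type u} [AddCommGroup M]
    [AddCommGroup N] [Module R M] [Module R N] : FactorsThroughProjective (0 : M →ₗ[R] N) :=
  ⟨R, inferInstance, inferInstance, inferInstance, 0, 0, LinearMap.zero_comp 0⟩

theorem exists_extension_of_factorsThroughProjective {R : Type u} [Ring R]
    {W Q V P : Type*} {K V₁ : Type u} [AddCommGroup W] [AddCommGroup Q] [AddCommGroup K]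
    [AddCommGroup V] [AddCommGroup P] [AddCommGroup V₁] [Module R W] [Module R Q] [Module R K]
    [Module R V] [Module R P] [Module R V₁]
    {iW : W →ₗ[R] Q} {pW : Q →ₗ[R] K} (hpW : Function.Surjective pW)
    (hW : Function.Exact iW pW) {iV : V →ₗ[R] P} {pV : P →ₗ[R] V₁}
    (hiV : Function.Injective iV) (hpV : Function.Surjective pV) (hV : Function.Exact iV pV)
    (hext : ∀ g : W →ₗ[R] P, ∃ G : Q →ₗ[R] P, G ∘ₗ iW = g)
    (hK : ∀ h : K →ₗ[R] V₁, FactorsThroughProjective h) (f : W →ₗ[R] V) :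
    ∃ t : Q →ₗ[R] V, t ∘ₗ iW = f := by
  obtain ⟨G, hG⟩ := hext (iV ∘ₗ f)
  obtain ⟨h, hh⟩ := hW.exists_comp_eq_of_surjective hpW (pV ∘ₗ G) (by
    rw [LinearMap.comp_assoc, hG, ← LinearMap.comp_assoc, hV.linearMap_comp_eq_zero,
      LinearMap.zero_comp])
  obtain ⟨P', _, _, _, α, β, rfl⟩ := hK h
  obtain ⟨β', hβ'⟩ := Module.projective_lifting_property pV β hpV
  obtain ⟨t, ht⟩ := hV.exists_comp_eq_of_injective hiV (G - β' ∘ₗ α ∘ₗ pW) (by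
    rw [LinearMap.comp_sub, ← hh, ← LinearMap.comp_assoc, hβ', LinearMap.comp_assoc, sub_self])
  refine ⟨t, LinearMap.ext fun w => hiV ?_⟩
  have hw := LinearMap.congr_fun ht (iW w)
  simp only [LinearMap.comp_apply, LinearMap.sub_apply, hW.apply_apply_eq_zero, map_zero,
    sub_zero] at hw
  rw [LinearMap.comp_apply, hw, ← LinearMap.comp_apply G, hG, LinearMap.comp_apply]

namespace CategoryTheory.ProjectiveResolution

variable {R : Type u} [Ring R] {K Q X : ModuleCat.{u} R} {i : K ⟶ Q} {p : Q ⟶ X}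
  (PK : ProjectiveResolution K)

-- `PK.π.f 0`, with its codomain `((single₀ _).obj K).X 0` unfolded to `K`.
def π₀ : PK.complex.X 0 ⟶ K := PK.π.f 0

instance : Epi PK.π₀ := inferInstanceAs (Epi (PK.π.f 0))

lemma d_comp_π₀_comp (i : K ⟶ Q) : PK.complex.d 1 0 ≫ PK.π₀ ≫ i = 0 :=
  (PK.complex_d_comp_π_f_zero_assoc i).trans Limits.zero_comp

lemma augment_exactAt_succ (hi : Function.Injective i) (n : ℕ) :
    (PK.complex.augment (PK.π₀ ≫ i) (PK.d_comp_π₀_comp i)).ExactAt (n + 1) := by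
  rw [HomologicalComplex.exactAt_iff' _ (n + 2) (n + 1) n (by simp) (by simp),
    ShortComplex.moduleCat_exact_iff]
  cases n with
  | zero =>
    intro x hx
    have h := PK.exact₀
    rw [ShortComplex.moduleCat_exact_iff] at h
    exact h x (hi (hx.trans (map_zero i.hom).symm))
  | succ m =>
    have h := PK.complex_exactAt_succ m
    rw [HomologicalComplex.exactAt_iff' _ (m + 2) (m + 1) m (by simp) (by simp),
      ShortComplex.moduleCat_exact_iff] at h
    exact h

variable (hi : Function.Injective i) (hp : Function.Surjective p) (hip : Function.Exact i p)

include hip in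
lemma augment_d_comp_eq_zero :
    (PK.complex.augment (PK.π₀ ≫ i) (PK.d_comp_π₀_comp i)).d 1 0 ≫ p = 0 := by
  ext x
  exact hip.apply_apply_eq_zero (PK.π₀ x)

def ofShortExact (hQ : Projective Q) : ProjectiveResolution X where
  complex := PK.complex.augment (PK.π₀ ≫ i) (PK.d_comp_π₀_comp i)
  projective
    | 0 => hQ
    | n + 1 => PK.projective n
  π := (ChainComplex.toSingle₀Equiv _ _).symm ⟨p, PK.augment_d_comp_eq_zero hip⟩
  quasiIso := ⟨fun
    | 0 => by
      rw [ChainComplex.quasiIsoAt₀_iff, ShortComplex.quasiIso_iff_of_zeros' _ rfl rfl rfl]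
      refine ⟨?_, (ModuleCat.epi_iff_surjective p).2 hp⟩
      rw [ShortComplex.moduleCat_exact_iff]
      intro (x : Q) (hx : p x = 0)
      obtain ⟨k, rfl⟩ := (hip x).1 hx
      obtain ⟨y, rfl⟩ := (ModuleCat.epi_iff_surjective PK.π₀).1 inferInstance k
      exact ⟨y, rfl⟩
    | n + 1 => by
      rw [quasiIsoAt_iff_exactAt' _ _ (ChainComplex.exactAt_succ_single_obj _ _)]
      exact PK.augment_exactAt_succ hi n⟩

end CategoryTheory.ProjectiveResolution

section CommRing

variable {R : Type u} [CommRing R]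

theorem extZero_iff_exactAt {X : ModuleCat.{u} R} (P : ProjectiveResolution X) (j : ℕ)
    (Y : ModuleCat.{u} R) :
    extZero R j X Y ↔ (P.complex.linearYonedaObj R Y).ExactAt j := by
  rw [HomologicalComplex.exactAt_iff_isZero_homology, ← (P.isoExt j Y).isZero_iff,
    ModuleCat.isZero_iff_subsingleton]
  rfl

theorem extZero_of_iso {j : ℕ} {K X Y : ModuleCat.{u} R} (e : K ≅ X) (h : extZero R j X Y) :
    extZero R j K Y :=
  (Equiv.subsingleton_congr
    (((Ext R (ModuleCat.{u} R) j).mapIso e.op).app Y).toLinearEquiv.toEquiv).1 h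

theorem eq_zero_of_extZero_zero {X Y : ModuleCat.{u} R} (h : extZero R 0 X Y) (ψ : X ⟶ Y) :
    ψ = 0 := by
  let P := ProjectiveResolution.of X
  rw [extZero_iff_exactAt P, HomologicalComplex.exactAt_iff' _ 0 0 1 (by simp) (by simp),
    ShortComplex.exact_iff_mono _ ((P.complex.linearYonedaObj R Y).shape 0 0 (by simp)),
    ModuleCat.mono_iff_injective] at h
  have hπψ : P.π₀ ≫ ψ = 0 := h ((P.d_comp_π₀_comp ψ).trans (map_zero _).symm)
  rw [← cancel_epi P.π₀, hπψ, Limits.comp_zero]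

section ShortExact

variable {K Q X : ModuleCat.{u} R} {i : K ⟶ Q} {p : Q ⟶ X} (hQ : Projective Q)
  (hi : Function.Injective i) (hp : Function.Surjective p) (hip : Function.Exact i p)
include hQ hi hp hip

theorem exists_comp_eq_of_extZero_one {Y : ModuleCat.{u} R} (h : extZero R 1 X Y)
    (ψ : K ⟶ Y) : ∃ φ : Q ⟶ Y, i ≫ φ = ψ := by
  let PK := ProjectiveResolution.of K
  rw [extZero_iff_exactAt (PK.ofShortExact hi hp hip hQ),
    HomologicalComplex.exactAt_iff' _ 0 1 2 (by simp) (by simp),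
    ShortComplex.moduleCat_exact_iff] at h
  obtain ⟨(φ : Q ⟶ Y), hφ⟩ := h (PK.π₀ ≫ ψ) (PK.d_comp_π₀_comp ψ)
  refine ⟨φ, ?_⟩
  rw [← cancel_epi PK.π₀, ← Category.assoc]
  exact hφ

theorem extZero_succ_iff_of_shortExact {Y : ModuleCat.{u} R} (j : ℕ) :
    extZero R (j + 2) X Y ↔ extZero R (j + 1) K Y := by
  let PK := ProjectiveResolution.of K
  rw [extZero_iff_exactAt (PK.ofShortExact hi hp hip hQ), extZero_iff_exactAt PK,
    HomologicalComplex.exactAt_iff' _ (j + 1) (j + 2) (j + 3) (by simp) (by simp),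
    HomologicalComplex.exactAt_iff' _ j (j + 1) (j + 2) (by simp) (by simp)]
  rfl

end ShortExact

theorem extZero_of_isSyzygy {Y : ModuleCat.{u} R} :
    ∀ {s j : ℕ} {K X : ModuleCat.{u} R}, IsSyzygy R s K X →
      extZero R (j + 1 + s) X Y → extZero R (j + 1) K Y
  | 0, _, _, _, ⟨e⟩, h => extZero_of_iso e h
  | s + 1, j, _, _, ⟨_, _, _, _, hQ, _, hi, hp, hip, hK⟩, h =>
    (extZero_succ_iff_of_shortExact hQ hi hp hip j).1
      (extZero_of_isSyzygy hK (by rwa [Nat.add_right_comm (j + 1) 1 s]))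

theorem IsSyzygy.exists_of_add {n : ℕ} :
    ∀ {m : ℕ} {V N : ModuleCat.{u} R}, IsSyzygy R (n + m) V N → ∃ M, IsSyzygy R m V M
  | 0, V, _, _ => ⟨V, ⟨Iso.refl V⟩⟩
  | _ + 1, _, _, ⟨P, K, i, p, hP, hPf, hi, hp, hip, hK⟩ =>
    let ⟨M, hM⟩ := IsSyzygy.exists_of_add hK
    ⟨M, P, K, i, p, hP, hPf, hi, hp, hip, hM⟩

theorem factorsThroughProjective_of_isSyzygy (X : ModuleCat.{u} R) :
    ∀ c : ℕ, (∀ i ≤ c, extZero R i X (ModuleCat.of R R)) → ∀ {W N V : ModuleCat.{u} R},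
      IsSyzygy R c W X → IsSyzygy R (c + 1) V N → ∀ f : W →ₗ[R] V, FactorsThroughProjective f
  | 0, hX, W, _, _, ⟨e⟩, ⟨P, _, iV, _, hP, hPf, hiV, _⟩, f => by
    have : Module.Projective R P := (IsProjective.iff_projective P).2 hP
    have hW : ∀ ψ : W →ₗ[R] R, ψ = 0 := fun ψ =>
      congrArg ModuleCat.Hom.hom
        (eq_zero_of_extZero_zero (extZero_of_iso e (hX 0 le_rfl)) (ModuleCat.ofHom ψ))
    have hf := LinearMap.eq_zero_of_forall_functional_eq_zero hW (iV.hom ∘ₗ f)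
    obtain rfl : f = 0 :=
      LinearMap.ext fun w => hiV ((LinearMap.congr_fun hf w).trans (map_zero _).symm)
    exact factorsThroughProjective_zero
  | c + 1, hX, W, _, _, ⟨Q, K, iW, pW, hQ, _, hiW, hpW, hW, hK⟩,
      ⟨P, V₁, iV, pV, hP, hPf, hiV, hpV, hV, hV₁⟩, f => by
    have : Module.Projective R Q := (IsProjective.iff_projective Q).2 hQ
    have : Module.Projective R P := (IsProjective.iff_projective P).2 hP
    have hK1 : extZero R 1 K (ModuleCat.of R R) :=
      extZero_of_isSyzygy hK (by simpa [Nat.add_comm] using hX (c + 1) le_rfl)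
    have hWdual : ∀ ψ : W →ₗ[R] R, ∃ φ : Q →ₗ[R] R, φ ∘ₗ iW.hom = ψ := fun ψ =>
      let ⟨φ, hφ⟩ := exists_comp_eq_of_extZero_one hQ hiW hpW hW hK1 (ModuleCat.ofHom ψ)
      ⟨φ.hom, congrArg ModuleCat.Hom.hom hφ⟩
    obtain ⟨t, ht⟩ := exists_extension_of_factorsThroughProjective hpW hW hiV hpV hV
      (LinearMap.exists_extension_of_forall_functional iW.hom hWdual)
      (factorsThroughProjective_of_isSyzygy X c (fun i hi => hX i (by omega)) hK hV₁) f
    exact ⟨Q, inferInstance, inferInstance, inferInstance, iW.hom, t, ht⟩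

end CommRing

theorem stmt4_general (R : Type u) [CommRing R]
    (X Y : ModuleCat.{u} R)
    (c n : ℕ) (hn : 1 ≤ n)
    (hgrade : ∀ i ≤ c, extZero R i X (ModuleCat.of R R))
    (W V : ModuleCat.{u} R) (hW : IsSyzygy R c W X) (hV : IsSyzygy R (c + n) V Y) :
    ∀ f : W →ₗ[R] V, FactorsThroughProjective f := by
  obtain ⟨N, hN⟩ := IsSyzygy.exists_of_add (n := n - 1) (m := c + 1)
    (by rwa [show n - 1 + (c + 1) = c + n by omega])
  exact factorsThroughProjective_of_isSyzygy X c hgrade hW hN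

/-- If `Ext^i_R(X,R) = 0` for `0 ≤ i ≤ c`, then every homomorphism
`Ω^c X → Ω^{c+n} Y` (`n ≥ 1`) factors through a projective module. -/
theorem stmt4 (R : Type u) [CommRing R] [IsNoetherianRing R]
    (X Y : ModuleCat.{u} R) [Module.Finite R X] [Module.Finite R Y]
    (c n : ℕ) (hn : 1 ≤ n)
    (hgrade : ∀ i ≤ c, extZero R i X (ModuleCat.of R R))
    (W V : ModuleCat.{u} R) (hW : IsSyzygy R c W X) (hV : IsSyzygy R (c + n) V Y) :
    ∀ f : W →ₗ[R] V, FactorsThroughProjective f :=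
  stmt4_general R X Y c n hn hgrade W V hW hV
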